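/- Let f and κ : ℝ → EReal be k-convex with speedp(f*) > −∞, let C ⊆ ℝ be a convex set with ψ = inf C and ψ̄ = sup C satisfying 0 < ψ̄ < +∞, and let χ = χ_C. Assume: Φ(nat f) ∩ C ≠ ∅; nat f is right-continuous at ψ̄; Φ(nat f) ∩ Φ(κ) ⊆ [ψ, ∞); and either κ(θ) ≥ θ·(nat f(ψ̄)/ψ̄) for every θ ≥ ψ̄, or varthetapp(f) ≤ ψ̄. Then max(nat(nat f + χ), κ)(θ) = max(nat f, κ)(θ) for every θ ≠ ψ, and if the two sides differ at θ = ψ then max(nat(nat f + χ), κ)(ψ) = +∞. -/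

import Mathlib

open Set Filter Topology

noncomputable section

/-- `f : ℝ → EReal` is convex iff its epigraph is a convex set. -/
def EConvex (f : ℝ → EReal) : Prop :=
  Convex ℝ {p : ℝ × ℝ | f p.1 ≤ (p.2 : EReal)}

/-- The Fenchel dual `f*(a) = sup_θ (θ·a − f(θ))`. -/
def Fd (f : ℝ → EReal) : ℝ → EReal :=
  fun a => ⨆ θ : ℝ, ((θ * a : ℝ) : EReal) - f θ

/-- The sweep `f°`: strictly positive values are swept to `+∞`. -/
def sweep (f : ℝ → EReal) : ℝ → EReal :=
  fun a => if f a ≤ 0 then f a else ⊤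

/-- `speedp f = inf {a | f a > 0}`, as an extended real. -/
def speedp (f : ℝ → EReal) : EReal :=
  sInf ((fun a : ℝ => (a : EReal)) '' {a : ℝ | 0 < f a})

/-- k-convex functions. -/
def KConvex (f : ℝ → EReal) : Prop :=
  EConvex f ∧ (∃ θ : ℝ, 0 < θ ∧ f θ < ⊤) ∧ (∀ θ : ℝ, θ < 0 → f θ = ⊤)

/-- The closure `cl f`: the greatest lower semicontinuous function beneath `f`. -/
def ecl (f : ℝ → EReal) : ℝ → EReal :=
  fun x => ⨆ g : {g : ℝ → EReal // LowerSemicontinuous g ∧ ∀ y, g y ≤ f y}, g.1 x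

/-- r-functions: increasing, convex, somewhere in `(−∞,0)`, left continuous,
and `+∞` whenever strictly positive. -/
def RFunction (r : ℝ → EReal) : Prop :=
  Monotone r ∧ EConvex r ∧ (∃ a : ℝ, ⊥ < r a ∧ r a < 0) ∧
    (∀ a : ℝ, ContinuousWithinAt r (Set.Iio a) a) ∧
    (∀ a : ℝ, 0 < r a → r a = ⊤)

/-- The greatest lower semicontinuous convex function beneath `f` and `g`. -/
def cv (f g : ℝ → EReal) : ℝ → EReal :=
  fun x => ⨆ h : {h : ℝ → EReal //
    LowerSemicontinuous h ∧ EConvex h ∧ (∀ y, h y ≤ f y) ∧ (∀ y, h y ≤ g y)}, h.1 x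

/-- `enat f`: the pointwise sup of convex minorants `g` of `f` with `g θ / θ`
antitone on `(0,∞)`. -/
def enat (f : ℝ → EReal) : ℝ → EReal :=
  fun x => ⨆ g : {g : ℝ → EReal // EConvex g ∧ (∀ y, g y ≤ f y) ∧
      AntitoneOn (fun θ : ℝ => g θ * ((θ⁻¹ : ℝ) : EReal)) (Set.Ioi 0)}, g.1 x

/-- `varthetapp f = sup {θ | f θ = enat f θ}`. -/
def varthetapp (f : ℝ → EReal) : EReal :=
  sSup ((fun θ : ℝ => (θ : EReal)) '' {θ : ℝ | f θ = enat f θ})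

/-- `flt f = ((f*)°)*`. -/
def flt (f : ℝ → EReal) : ℝ → EReal := Fd (sweep (Fd f))

/-- The set where `f` is finite. -/
def Phi (f : ℝ → EReal) : Set ℝ := {θ : ℝ | f θ < ⊤}

/-- `A⁺`: points in `A` or above a point of `A`. -/
def plusSet (A : Set ℝ) : Set ℝ := {x : ℝ | ∃ a ∈ A, a ≤ x}

/-- The subdifferential of `f` at `φ`. -/
def esubdiff (f : ℝ → EReal) (φ : ℝ) : Set ℝ :=
  {a : ℝ | ∀ θ : ℝ, f φ + ((a * (θ - φ) : ℝ) : EReal) ≤ f θ}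

open Classical in
/-- The convex indicator of a set: `0` on `C` and `+∞` off it. -/
def echi (C : Set ℝ) : ℝ → EReal := fun θ => if θ ∈ C then 0 else ⊤

/-!
Write `g = nat f`. On `C` the indicator vanishes, so `nat (g + χ_C) = g` there; below `ψ`
one of `g`, `κ` is `+∞`, and at `ψ ∉ C` the indicator makes `nat (g + χ_C)` infinite.
For `θ ≥ ψ̄`, the ratio `h θ / θ` of every admissible minorant `h` of `g + χ_C` is bounded by
the ratios `g y / y` for `y ∈ C`, and convexity of `g` lets `y` tend to `ψ̄`, so
`nat (g + χ_C) θ ≤ θ · g ψ̄ / ψ̄`. Under the first alternative this is at most `κ θ`.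

Under the second, `g` is linear through the origin on `[ψ̄, ∞)`. Otherwise some line `c·y` with
`g θ / θ < c < g ψ̄ / ψ̄` lies below `f` on `(−∞, ψ̄]` but not on `(−∞, θ]`. Take the first point
`x₀` where `f` falls below it: `x₀ = ψ̄` contradicts right-continuity of `g`; if `x₀ > ψ̄` then
`f x₀ = c x₀`, and the supporting line of `f` at `x₀` has slope at most `c`, hence nonnegative
intercept, so it is an admissible minorant and `g x₀ = f x₀`, contradicting `varthetapp f ≤ ψ̄`.
-/

namespace EReal

lemma coe_le_div_iff {F : EReal} {c y : ℝ} (hy : 0 < y) :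
    (c : EReal) ≤ F / y ↔ ((c * y : ℝ) : EReal) ≤ F := by
  rw [le_div_iff_mul_le (by exact_mod_cast hy) (coe_ne_top y), coe_mul]

lemma div_le_coe_iff {F : EReal} {c y : ℝ} (hy : 0 < y) :
    F / y ≤ c ↔ F ≤ ((c * y : ℝ) : EReal) := by
  rw [div_le_iff_le_mul (by exact_mod_cast hy) (coe_ne_top y), ← coe_mul, mul_comm]

end EReal

section Enat

variable {f g : ℝ → EReal}

lemma le_enat (hg : EConvex g) (hgf : ∀ y, g y ≤ f y)
    (hanti : AntitoneOn (fun θ : ℝ => g θ / θ) (Ioi 0)) (x : ℝ) : g x ≤ enat f x :=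
  le_iSup (fun s : {g : ℝ → EReal // EConvex g ∧ (∀ y, g y ≤ f y) ∧
      AntitoneOn (fun θ : ℝ => g θ * ((θ⁻¹ : ℝ) : EReal)) (Ioi 0)} => s.1 x) ⟨g, hg, hgf, hanti⟩

lemma enat_le (f : ℝ → EReal) (x : ℝ) : enat f x ≤ f x :=
  iSup_le fun s => s.2.2.1 x

lemma econvex_enat (f : ℝ → EReal) : EConvex (enat f) := by
  have : {p : ℝ × ℝ | enat f p.1 ≤ (p.2 : EReal)} =
      ⋂ s : {g : ℝ → EReal // EConvex g ∧ (∀ y, g y ≤ f y) ∧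
        AntitoneOn (fun θ : ℝ => g θ * ((θ⁻¹ : ℝ) : EReal)) (Ioi 0)},
        {p : ℝ × ℝ | s.1 p.1 ≤ (p.2 : EReal)} := by
    ext p
    simp only [mem_ofPred_eq, mem_iInter, enat, iSup_le_iff]
  rw [EConvex, this]
  exact convex_iInter fun s => s.2.1

lemma antitoneOn_enat_div (f : ℝ → EReal) :
    AntitoneOn (fun θ : ℝ => enat f θ / θ) (Ioi 0) := by
  intro x (hx : 0 < x) y (hy : 0 < y) hxy
  have hy' : (0 : EReal) < y := by exact_mod_cast hy
  refine (EReal.div_le_iff_le_mul hy' (EReal.coe_ne_top y)).2 (iSup_le fun s => ?_)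
  have hs : s.1 y / y ≤ enat f x / x :=
    (s.2.2.2 hx hy hxy).trans (EReal.div_le_div_right_of_nonneg (EReal.coe_nonneg.2 hx.le)
      (le_iSup (fun s : {g : ℝ → EReal // EConvex g ∧ (∀ y, g y ≤ f y) ∧
        AntitoneOn (fun θ : ℝ => g θ * ((θ⁻¹ : ℝ) : EReal)) (Ioi 0)} => s.1 x) s))
  exact (EReal.div_le_iff_le_mul hy' (EReal.coe_ne_top y)).1 hs

lemma econvex_affine (d e : ℝ) : EConvex (fun y : ℝ => ((d * y + e : ℝ) : EReal)) := by
  have : ConvexOn ℝ univ (fun y : ℝ => d * y + e) :=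
    ⟨convex_univ, fun x _ y _ a b _ _ hab =>
      le_of_eq (by simp only [smul_eq_mul]; linear_combination (-e) * hab)⟩
  simpa only [EConvex, EReal.coe_le_coe_iff, mem_univ, true_and] using this.convex_epigraph

lemma affine_le_enat {d e : ℝ} (he : 0 ≤ e) (h : ∀ y, ((d * y + e : ℝ) : EReal) ≤ f y)
    (x : ℝ) : ((d * x + e : ℝ) : EReal) ≤ enat f x := by
  refine le_enat (econvex_affine d e) h (fun y (hy : 0 < y) z (hz : 0 < z) hyz => ?_) x
  simp only [← EReal.coe_div, EReal.coe_le_coe_iff, add_div, mul_div_assoc,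
    div_self hy.ne', div_self hz.ne', mul_one]
  have : e / z ≤ e / y := div_le_div_of_nonneg_left he hy hyz
  linarith

lemma enat_eq_top_of_isLowerSet {S : Set ℝ} {a₀ x : ℝ} (hS : IsLowerSet S)
    (hline : ∀ θ, ((θ * a₀ : ℝ) : EReal) ≤ f θ) (htop : ∀ θ ∈ S, f θ = ⊤) (hx : x ∈ S) :
    enat f x = ⊤ := by
  classical
  set b : ℝ → EReal := fun θ => if θ ∈ S then ⊤ else ((θ * a₀ : ℝ) : EReal)
  have hb : EConvex b := by
    have : {p : ℝ × ℝ | b p.1 ≤ (p.2 : EReal)} =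
        Sᶜ ×ˢ univ ∩ {p : ℝ × ℝ | ((a₀ * p.1 + 0 : ℝ) : EReal) ≤ (p.2 : EReal)} := by
      ext ⟨θ, t⟩
      by_cases hθ : θ ∈ S <;> simp [b, hθ, mul_comm]
    rw [EConvex, this]
    exact (hS.compl.ordConnected.convex.prod convex_univ).inter (econvex_affine a₀ 0)
  have hbf : ∀ θ, b θ ≤ f θ := fun θ => by
    by_cases hθ : θ ∈ S
    · simp [b, hθ, htop θ hθ]
    · simpa [b, hθ] using hline θ
  have htop_div : ∀ w : ℝ, 0 < w → w ∈ S → b w / w = ⊤ := fun w hw hwS => by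
    simp [b, hwS, EReal.top_div_of_pos_ne_top (EReal.coe_pos.2 hw) (EReal.coe_ne_top w)]
  have hline_div : ∀ w : ℝ, 0 < w → w ∉ S → b w / w = a₀ := fun w hw hwS => by
    simp only [b, if_neg hwS]
    rw [← EReal.coe_div, mul_div_cancel_left₀ _ hw.ne']
  have hanti : AntitoneOn (fun θ : ℝ => b θ / θ) (Ioi 0) := by
    intro y (hy : 0 < y) z (hz : 0 < z) hyz
    by_cases hzS : z ∈ S
    · simp only [htop_div z hz hzS, htop_div y hy (hS hyz hzS), le_refl]
    by_cases hyS : y ∈ S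
    · simp only [htop_div y hy hyS, le_top]
    · simp only [hline_div z hz hzS, hline_div y hy hyS, le_refl]
  simpa [b, hx] using le_enat hb hbf hanti x

lemma exists_lt_lt_top_of_enat_lt_top {a₀ a x : ℝ} (hline : ∀ θ, ((θ * a₀ : ℝ) : EReal) ≤ f θ)
    (ha : enat f a < ⊤) (hax : a < x) : ∃ s < x, f s < ⊤ := by
  by_contra! htop
  exact ha.ne (enat_eq_top_of_isLowerSet (isLowerSet_Iio x) hline
    (fun s hs => top_le_iff.1 (htop s hs)) hax)

lemma linear_le_enat {a₀ : ℝ} (hline : ∀ θ, ((θ * a₀ : ℝ) : EReal) ≤ f θ) (x : ℝ) :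
    ((x * a₀ : ℝ) : EReal) ≤ enat f x := by
  have := affine_le_enat (f := f) (d := a₀) (e := 0) le_rfl
    (fun y => by simpa only [add_zero, mul_comm] using hline y) x
  simpa only [add_zero, mul_comm] using this

lemma exists_linear_le_of_bot_lt_speedp (hΓ : ⊥ < speedp (Fd f)) :
    ∃ a₀ : ℝ, ∀ θ, ((θ * a₀ : ℝ) : EReal) ≤ f θ := by
  obtain ⟨a₀, -, ha₀⟩ := EReal.exists_between_coe_real hΓ
  refine ⟨a₀, fun θ => ?_⟩
  have hdual : Fd f a₀ ≤ 0 := not_lt.1 fun hpos =>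
    (show speedp (Fd f) ≤ a₀ from sInf_le ⟨a₀, hpos, rfl⟩).not_gt ha₀
  have := (le_iSup (fun θ : ℝ => ((θ * a₀ : ℝ) : EReal) - f θ) θ).trans hdual
  rwa [EReal.sub_nonpos] at this

end Enat

namespace EConvex

variable {F : ℝ → EReal}

lemma le_chord (hF : EConvex F) {s x u a b : ℝ} (hsu : s < u) (hx : x ∈ Icc s u)
    (ha : F s ≤ a) (hb : F u ≤ b) :
    F x ≤ (((u - x) * a + (x - s) * b) / (u - s) : ℝ) := by
  have hus : 0 < u - s := sub_pos.2 hsu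
  have := hF (show (s, a) ∈ {p : ℝ × ℝ | F p.1 ≤ p.2} from ha)
    (show (u, b) ∈ {p : ℝ × ℝ | F p.1 ≤ p.2} from hb)
    (div_nonneg (sub_nonneg.2 hx.2) hus.le) (div_nonneg (sub_nonneg.2 hx.1) hus.le)
    (by field_simp; ring)
  simp only [mem_ofPred_eq, Prod.fst_add, Prod.snd_add, Prod.smul_mk, smul_eq_mul] at this
  convert this using 3
  · field_simp; ring
  · field_simp

lemma le_of_frequently_le (hF : EConvex F) {φ : ℝ → ℝ} {s x : ℝ} (hsx : s < x) (hs : F s < ⊤)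
    (hφ : ContinuousAt φ x) (h : ∃ᶠ u in 𝓝[≥] x, F u ≤ φ u) : F x ≤ φ x := by
  set r := (F s).toReal
  let chord : ℝ → ℝ := fun u => ((u - x) * r + (x - s) * φ u) / (u - s)
  have hchord : Tendsto (fun u => (chord u : EReal)) (𝓝[≥] x) (𝓝 (φ x)) := by
    have hcont : ContinuousAt chord x :=
      ((continuousAt_id.sub continuousAt_const).mul continuousAt_const |>.add
        (continuousAt_const.mul hφ)).div (continuousAt_id.sub continuousAt_const)
        (sub_ne_zero.2 hsx.ne')
    have hx : chord x = φ x := by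
      simp only [chord, sub_self, zero_mul, zero_add]
      field_simp [sub_ne_zero.2 hsx.ne']
    rw [← hx]
    exact (continuous_coe_real_ereal.continuousAt.comp hcont).tendsto.mono_left
      nhdsWithin_le_nhds
  refine ge_of_tendsto_of_frequently hchord ((h.and_eventually self_mem_nhdsWithin).mono ?_)
  rintro u ⟨hu, hxu : x ≤ u⟩
  exact hF.le_chord (hsx.trans_le hxu) ⟨hsx.le, hxu⟩ (EReal.le_coe_toReal hs.ne) hu

lemma ge_of_eventually_ge (hF : EConvex F) {φ : ℝ → ℝ} {s x : ℝ} (hsx : s < x) (hs : F s < ⊤)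
    (hφ : ContinuousAt φ x) (h : ∀ᶠ y in 𝓝[<] x, (φ y : EReal) ≤ F y) : (φ x : EReal) ≤ F x := by
  by_contra! hlt
  obtain ⟨R, hxR, hRφ⟩ := EReal.exists_between_coe_real hlt
  set r := (F s).toReal
  let chord : ℝ → ℝ := fun y => ((x - y) * r + (y - s) * R) / (x - s)
  have hchord : Tendsto chord (𝓝[<] x) (𝓝 R) := by
    have hcont : Continuous chord := by fun_prop
    have hx : chord x = R := by
      simp only [chord, sub_self, zero_mul, zero_add]
      field_simp [sub_ne_zero.2 hsx.ne']
    exact hx ▸ hcont.continuousAt.tendsto.mono_left nhdsWithin_le_nhds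
  have hle : ∀ᶠ y in 𝓝[<] x, φ y ≤ chord y := by
    filter_upwards [h, self_mem_nhdsWithin,
      nhdsWithin_le_nhds (Ioi_mem_nhds hsx)] with y hy (hyx : y < x) (hsy : s < y)
    exact EReal.coe_le_coe_iff.1 (hy.trans (hF.le_chord hsx ⟨hsy.le, hyx.le⟩
      (EReal.le_coe_toReal hs.ne) hxR.le))
  exact (EReal.coe_lt_coe_iff.1 hRφ).not_ge
    (le_of_tendsto_of_tendsto (hφ.tendsto.mono_left nhdsWithin_le_nhds) hchord hle)

lemma exists_supporting_line (hF : EConvex F) {s x v c : ℝ} (hsx : s < x) (hs : F s < ⊤)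
    (hv : (v : EReal) ≤ F x) (hleft : ∀ y < x, ((v + c * (y - x) : ℝ) : EReal) ≤ F y) :
    ∃ δ ≤ c, ∀ y, ((v + δ * (y - x) : ℝ) : EReal) ≤ F y := by
  -- `sSup S` is the supporting slope: the line through `(x, v)` with that slope stays below `F`
  -- on the left by maximality, and on the right by the three-slope inequality at `x`.
  set S : Set ℝ := {σ | ∃ y < x, F y ≤ ((v + σ * (y - x) : ℝ) : EReal)}
  have hS_le : ∀ σ ∈ S, σ ≤ c := by
    rintro σ ⟨y, hyx, hy⟩
    have := EReal.coe_le_coe_iff.1 ((hleft y hyx).trans hy)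
    nlinarith
  have hS_ne : S.Nonempty := ⟨(v - (F s).toReal) / (x - s), s, hsx, by
    convert EReal.le_coe_toReal hs.ne using 2
    field_simp [sub_ne_zero.2 hsx.ne']
    ring⟩
  have hS_bdd : BddAbove S := ⟨c, hS_le⟩
  refine ⟨sSup S, csSup_le hS_ne hS_le, fun y => ?_⟩
  rcases lt_trichotomy y x with hyx | rfl | hxy
  · by_contra! hlt
    obtain ⟨R, hyR, hR⟩ := EReal.exists_between_coe_real hlt
    have hmem : (v - R) / (x - y) ∈ S := ⟨y, hyx, by
      convert hyR.le using 2
      field_simp [sub_ne_zero.2 hyx.ne']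
      ring⟩
    have := le_csSup hS_bdd hmem
    rw [div_le_iff₀ (sub_pos.2 hyx)] at this
    linarith [EReal.coe_lt_coe_iff.1 hR]
  · simpa using hv
  · by_contra! hlt
    obtain ⟨R, hyR, hR⟩ := EReal.exists_between_coe_real hlt
    have hbound : sSup S ≤ (R - v) / (y - x) := csSup_le hS_ne fun σ ⟨z, hzx, hz⟩ => by
      have := EReal.coe_le_coe_iff.1
        (hv.trans (hF.le_chord (hzx.trans hxy) ⟨hzx.le, hxy.le⟩ hz hyR.le))
      rw [le_div_iff₀ (sub_pos.2 (hzx.trans hxy))] at this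
      rw [le_div_iff₀ (sub_pos.2 hxy)]
      nlinarith [sub_pos.2 hzx]
    rw [le_div_iff₀ (sub_pos.2 hxy)] at hbound
    linarith [EReal.coe_lt_coe_iff.1 hR]

lemma exists_first_crossing (hF : EConvex F) {φ : ℝ → ℝ} (hφ : Continuous φ) {p : ℝ}
    (hfin : ∀ x, p < x → ∃ s < x, F s < ⊤) (hle : ∀ y ≤ p, (φ y : EReal) ≤ F y)
    (hB : ∃ y, p < y ∧ F y < φ y) :
    (∃ᶠ u in 𝓝[≥] p, F u < φ u) ∨ ∃ x, p < x ∧ F x = φ x ∧ ∀ y ≤ x, (φ y : EReal) ≤ F y := by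
  set B : Set ℝ := {y | p < y ∧ F y < φ y}
  have hB_bdd : BddBelow B := ⟨p, fun y hy => hy.1.le⟩
  have hpB : p ≤ sInf B := le_csInf hB fun y hy => hy.1.le
  have hbelow : ∀ y < sInf B, (φ y : EReal) ≤ F y := fun y hy => by
    rcases le_or_gt y p with hyp | hpy
    · exact hle y hyp
    · exact not_lt.1 fun hlt => hy.not_ge (csInf_le hB_bdd ⟨hpy, hlt⟩)
  have hfreq : ∃ᶠ u in 𝓝[≥] sInf B, F u < φ u :=
    ((isGLB_csInf hB hB_bdd).frequently_mem hB).mono fun u hu => hu.2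
  rcases hpB.eq_or_lt with hp | hp
  · exact Or.inl (hp ▸ hfreq)
  obtain ⟨s, hs, hFs⟩ := hfin _ hp
  have hge := hF.ge_of_eventually_ge hs hFs hφ.continuousAt
    (eventually_nhdsWithin_of_forall hbelow)
  refine Or.inr ⟨sInf B, hp, le_antisymm (hF.le_of_frequently_le hs hFs hφ.continuousAt
    (hfreq.mono fun _ => le_of_lt)) hge, fun y hy => ?_⟩
  rcases hy.lt_or_eq with hy | rfl
  exacts [hbelow y hy, hge]

end EConvex

lemma Convex.mem_of_isLUB {C : Set ℝ} {p a y : ℝ} (hC : Convex ℝ C) (hp : IsLUB C p)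
    (ha : a ∈ C) (hay : a ≤ y) (hyp : y < p) : y ∈ C := by
  obtain ⟨b, hb, hyb, -⟩ := hp.exists_between hyp
  exact hC.ordConnected.out ha hb ⟨hay, hyb.le⟩

lemma Convex.mem_of_isGLB_of_isLUB {C : Set ℝ} {q p y : ℝ} (hC : Convex ℝ C) (hq : IsGLB C q)
    (hp : IsLUB C p) (hqy : q < y) (hyp : y < p) : y ∈ C := by
  obtain ⟨a, ha, -, hay⟩ := hq.exists_between hqy
  exact hC.mem_of_isLUB hp ha hay.le hyp

section Indicator

variable {C : Set ℝ}

lemma echi_nonneg (C : Set ℝ) (x : ℝ) : 0 ≤ echi C x := by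
  unfold echi
  split_ifs <;> simp

lemma enat_le_enat_add_echi (f : ℝ → EReal) (C : Set ℝ) (x : ℝ) :
    enat f x ≤ enat (fun y => enat f y + echi C y) x :=
  le_enat (econvex_enat f) (fun y => le_add_of_nonneg_right (echi_nonneg C y))
    (antitoneOn_enat_div f) x

lemma enat_add_echi_eq_of_mem (f : ℝ → EReal) {x : ℝ} (hx : x ∈ C) :
    enat (fun y => enat f y + echi C y) x = enat f x := by
  refine le_antisymm ?_ (enat_le_enat_add_echi f C x)
  simpa [echi, hx] using enat_le (fun y => enat f y + echi C y) x

lemma enat_add_echi_eq_top {h : ℝ → EReal} {a₀ q : ℝ}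
    (hline : ∀ θ, ((θ * a₀ : ℝ) : EReal) ≤ h θ) (hq : IsGLB C q) (hqC : q ∉ C) :
    enat (fun y => h y + echi C y) q = ⊤ := by
  refine enat_eq_top_of_isLowerSet (isLowerSet_Iic q)
    (fun θ => (hline θ).trans (le_add_of_nonneg_right (echi_nonneg C θ)))
    (fun θ (hθ : θ ≤ q) => ?_) (mem_Iic.2 le_rfl)
  have hθC : θ ∉ C := fun hθC => hqC (le_antisymm hθ (hq.1 hθC) ▸ hθC)
  simp only [echi, hθC, if_false]
  exact EReal.add_top_of_ne_bot (ne_bot_of_le_ne_bot (EReal.coe_ne_bot _) (hline θ))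

end Indicator

section Ratio

variable {f : ℝ → EReal}

lemma le_enat_of_linear_le (hf : EConvex f) {s x c : ℝ} (hx : 0 < x) (hsx : s < x)
    (hs : f s < ⊤) (h : ∀ y ≤ x, ((c * y : ℝ) : EReal) ≤ f y) :
    ((c * x : ℝ) : EReal) ≤ enat f x := by
  obtain ⟨δ, hδc, hδ⟩ := hf.exists_supporting_line (c := c) hsx hs (h x le_rfl) fun y hy => by
    simpa only [show c * x + c * (y - x) = c * y by ring] using h y hy.le
  have := affine_le_enat (d := δ) (e := (c - δ) * x) (by nlinarith)
    (fun y => by simpa only [show c * x + δ * (y - x) = δ * y + (c - δ) * x by ring] using hδ y) x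
  rwa [show δ * x + (c - δ) * x = c * x by ring] at this

lemma enat_add_echi_le_mul_div {C : Set ℝ} {p a θ : ℝ} (hC : Convex ℝ C) (hp : IsLUB C p)
    (hp0 : 0 < p) (haC : a ∈ C) (ha : enat f a < ⊤) (hθ : p ≤ θ) :
    enat (fun x => enat f x + echi C x) θ ≤ θ * (enat f p / p) := by
  set w := enat (fun x => enat f x + echi C x)
  have hθ0 : 0 < θ := hp0.trans_le hθ
  have hratio : ∀ y ∈ C, 0 < y → y ≤ θ → w θ / θ ≤ enat f y / y := fun y hyC hy hyθ =>
    (antitoneOn_enat_div _ hy hθ0 hyθ).trans (EReal.div_le_div_right_of_nonneg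
      (EReal.coe_nonneg.2 hy.le) ((enat_add_echi_eq_of_mem f hyC).le))
  rw [← EReal.div_le_iff_le_mul (EReal.coe_pos.2 hθ0) (EReal.coe_ne_top θ)]
  by_cases hpC : p ∈ C
  · exact hratio p hpC hp0 hθ
  have hap : a < p := (hp.1 haC).lt_of_ne fun hap => hpC (hap ▸ haC)
  refine EReal.ge_of_forall_gt_iff_ge.1 fun c hc => ?_
  rw [EReal.coe_le_div_iff hp0]
  refine (econvex_enat f).ge_of_eventually_ge (φ := fun y => c * y) hap ha (by fun_prop) ?_
  filter_upwards [self_mem_nhdsWithin, nhdsWithin_le_nhds (Ioi_mem_nhds (max_lt hap hp0))]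
    with y (hyp : y < p) (hy : max a 0 < y)
  rw [max_lt_iff] at hy
  exact (EReal.coe_le_div_iff hy.2).1 (hc.le.trans
    (hratio y (hC.mem_of_isLUB hp haC hy.1.le hyp) hy.2 (hyp.le.trans hθ)))

lemma mul_enat_div_le_enat_of_varthetapp_le (hf : EConvex f) (hneg : ∀ θ < 0, f θ = ⊤)
    {a₀ p a θ : ℝ} (hline : ∀ θ, ((θ * a₀ : ℝ) : EReal) ≤ f θ) (hp0 : 0 < p) (hϑ : varthetapp f ≤ p)
    (hrc : ContinuousWithinAt (enat f) (Ici p) p) (ha : enat f a < ⊤) (hap : a ≤ p)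
    (hθ : p ≤ θ) : (θ : EReal) * (enat f p / p) ≤ enat f θ := by
  have hθ0 : 0 < θ := hp0.trans_le hθ
  rw [mul_comm, ← EReal.le_div_iff_mul_le (EReal.coe_pos.2 hθ0) (EReal.coe_ne_top θ)]
  rcases hθ.eq_or_lt with rfl | hpθ
  · exact le_rfl
  by_contra! hlt
  obtain ⟨c, hcθ, hcp⟩ := EReal.exists_between_coe_real hlt
  have hne : ∀ x, p < x → f x ≠ enat f x := fun x hpx heq =>
    (EReal.coe_lt_coe_iff.2 hpx).not_ge
      ((show (x : EReal) ≤ varthetapp f from le_sSup ⟨x, heq, rfl⟩).trans hϑ)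
  have hfin : ∀ x, p < x → ∃ s < x, f s < ⊤ := fun x hpx =>
    exists_lt_lt_top_of_enat_lt_top hline ha (hap.trans_lt hpx)
  have hcf : ∀ y ≤ p, ((c * y : ℝ) : EReal) ≤ f y := fun y hyp => by
    rcases lt_trichotomy y 0 with hy | rfl | hy
    · simp [hneg y hy]
    · simpa using hline 0
    · exact ((EReal.coe_le_div_iff hy).1
        (hcp.le.trans (antitoneOn_enat_div f hy hp0 hyp))).trans (enat_le f y)
  have hsupp : ∀ x, p < x → (∀ y ≤ x, ((c * y : ℝ) : EReal) ≤ f y) →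
      ((c * x : ℝ) : EReal) ≤ enat f x := fun x hpx h => by
    obtain ⟨s, hs, hfs⟩ := hfin x hpx
    exact le_enat_of_linear_le hf (hp0.trans hpx) hs hfs h
  have hB : ∃ y, p < y ∧ f y < ((c * y : ℝ) : EReal) := by
    by_contra! hB
    refine hcθ.not_ge ((EReal.coe_le_div_iff hθ0).2 (hsupp θ hpθ fun y _ => ?_))
    rcases le_or_gt y p with hyp | hpy
    exacts [hcf y hyp, hB y hpy]
  rcases hf.exists_first_crossing (φ := fun y => c * y) (by fun_prop) hfin hcf hB with
    hfreq | ⟨x, hpx, heq, hbelow⟩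
  · have hgp : enat f p ≤ ((c * p : ℝ) : EReal) :=
      le_of_tendsto_of_tendsto_of_frequently hrc
        ((continuous_coe_real_ereal.comp (continuous_const_mul c)).tendsto p |>.mono_left
          nhdsWithin_le_nhds)
        (hfreq.mono fun u hu => (enat_le f u).trans hu.le)
    exact hcp.not_ge ((EReal.div_le_coe_iff hp0).2 hgp)
  · exact hne x hpx (le_antisymm (heq.le.trans (hsupp x hpx hbelow)) (enat_le f x))

end Ratio

theorem enat_plus_indicator_max_general (f κ : ℝ → EReal) (hf : KConvex f)
    (hΓ : ⊥ < speedp (Fd f))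
    (C : Set ℝ) (hC : Convex ℝ C)
    (q p : ℝ) (hq : IsGLB C q) (hp : IsLUB C p) (hp0 : 0 < p)
    (hne : (Phi (enat f) ∩ C).Nonempty)
    (hrc : ContinuousWithinAt (enat f) (Set.Ici p) p)
    (hsub : Phi (enat f) ∩ Phi κ ⊆ Set.Ici q)
    (heither :
      (∀ θ : ℝ, p ≤ θ → (θ : EReal) * (enat f p * ((p⁻¹ : ℝ) : EReal)) ≤ κ θ) ∨
      varthetapp f ≤ (p : EReal)) :
    (∀ θ : ℝ, θ ≠ q →
      max (enat (fun x => enat f x + echi C x) θ) (κ θ) =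
        max (enat f θ) (κ θ)) ∧
    (max (enat (fun x => enat f x + echi C x) q) (κ q) ≠
        max (enat f q) (κ q) →
      max (enat (fun x => enat f x + echi C x) q) (κ q) = ⊤) := by
  obtain ⟨a₀, hline⟩ := exists_linear_le_of_bot_lt_speedp hΓ
  obtain ⟨a, ha, haC⟩ := hne
  have hle : ∀ θ, θ ≠ q →
      enat (fun x => enat f x + echi C x) θ ≤ max (enat f θ) (κ θ) := by
    intro θ hθq
    by_cases hθC : θ ∈ C
    · exact (enat_add_echi_eq_of_mem f hθC).le.trans (le_max_left _ _)
    rcases hθq.lt_or_gt with hθq | hqθ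
    · have : ¬ (enat f θ < ⊤ ∧ κ θ < ⊤) := fun h => (hsub h).not_gt hθq
      rcases not_and_or.1 this with h | h <;> simp [not_lt_top_iff.1 h]
    have hpθ : p ≤ θ := not_lt.1 fun hθp => hθC (hC.mem_of_isGLB_of_isLUB hq hp hqθ hθp)
    refine (enat_add_echi_le_mul_div hC hp hp0 haC ha hpθ).trans ?_
    rcases heither with hκ | hϑ
    · exact (hκ θ hpθ).trans (le_max_right _ _)
    · exact (mul_enat_div_le_enat_of_varthetapp_le hf.1 hf.2.2 hline hp0 hϑ hrc ha (hp.1 haC)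
        hpθ).trans (le_max_left _ _)
  refine ⟨fun θ hθq => le_antisymm (max_le (hle θ hθq) (le_max_right _ _))
    (max_le_max (enat_le_enat_add_echi f C θ) le_rfl), fun hdiff => ?_⟩
  have hqC : q ∉ C := fun hqC => hdiff (by rw [enat_add_echi_eq_of_mem f hqC])
  rw [enat_add_echi_eq_top (linear_le_enat hline) hq hqC]
  exact max_eq_left le_top

/-- Lemma `fg agree lemma` (iv): under the stated conditions,
`max (nat (nat f + χ_C)) κ = max (nat f) κ` except possibly at `ψ = inf C`,
where the left side can only differ by being `+∞`. -/
theorem enat_plus_indicator_max (f κ : ℝ → EReal) (hf : KConvex f)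
    (hκ : KConvex κ) (hΓ : ⊥ < speedp (Fd f))
    (C : Set ℝ) (hC : Convex ℝ C)
    (q p : ℝ) (hq : IsGLB C q) (hp : IsLUB C p) (hp0 : 0 < p)
    (hne : (Phi (enat f) ∩ C).Nonempty)
    (hrc : ContinuousWithinAt (enat f) (Set.Ici p) p)
    (hsub : Phi (enat f) ∩ Phi κ ⊆ Set.Ici q)
    (heither :
      (∀ θ : ℝ, p ≤ θ → (θ : EReal) * (enat f p * ((p⁻¹ : ℝ) : EReal)) ≤ κ θ) ∨
      varthetapp f ≤ (p : EReal)) :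
    (∀ θ : ℝ, θ ≠ q →
      max (enat (fun x => enat f x + echi C x) θ) (κ θ) =
        max (enat f θ) (κ θ)) ∧
    (max (enat (fun x => enat f x + echi C x) q) (κ q) ≠
        max (enat f q) (κ q) →
      max (enat (fun x => enat f x + echi C x) q) (κ q) = ⊤) :=
  enat_plus_indicator_max_general f κ hf hΓ C hC q p hq hp hp0 hne hrc hsub heither
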